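/- arXiv:2105.09636 — 4 statements merged into one kernel-verified Lean document; each statement's English description precedes it below -/
import Mathlib

section
/- Let ℬ, 𝒜, 𝒞 form a symmetric ladder of height 2 of module categories (mod B, mod A, mod C). If 𝒮_X is a semibrick in mod B and 𝒮_Y is a semibrick in mod C, then 𝒮_Z = i₀(𝒮_X) ⊔ j₋₁(𝒮_Y) is a semibrick in mod A, where i₀ : mod B → mod A and j₋₁ : mod C → mod A are the fully faithful exact functors of the ladder. -/
open CategoryTheory CategoryTheory.Limits

universe v u
namespace Paper
variable {𝒜 : Type u} [Category.{v} 𝒜] [Abelian 𝒜]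

/-- `f : X ⟶ T` is a left `𝒯`-approximation. -/
def IsLeftApprox (𝒯 : Set 𝒜) {X T : 𝒜} (f : X ⟶ T) : Prop :=
  T ∈ 𝒯 ∧ ∀ ⦃T' : 𝒜⦄, T' ∈ 𝒯 → ∀ g : X ⟶ T', ∃ h : T ⟶ T', f ≫ h = g

def IsMinimalLeftApprox (𝒯 : Set 𝒜) {X T : 𝒜} (f : X ⟶ T) : Prop :=
  IsLeftApprox 𝒯 f ∧ ∀ g : T ⟶ T, f ≫ g = f → IsIso g

def IsRightApprox (𝒯 : Set 𝒜) {T X : 𝒜} (f : T ⟶ X) : Prop :=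
  T ∈ 𝒯 ∧ ∀ ⦃T' : 𝒜⦄, T' ∈ 𝒯 → ∀ g : T' ⟶ X, ∃ h : T' ⟶ T, h ≫ f = g

def CovariantlyFinite (𝒯 : Set 𝒜) : Prop :=
  ∀ X : 𝒜, ∃ (T : 𝒜) (f : X ⟶ T), IsLeftApprox 𝒯 f

def ContravariantlyFinite (𝒯 : Set 𝒜) : Prop :=
  ∀ X : 𝒜, ∃ (T : 𝒜) (f : T ⟶ X), IsRightApprox 𝒯 f

def FunctoriallyFinite (𝒯 : Set 𝒜) : Prop :=
  CovariantlyFinite 𝒯 ∧ ContravariantlyFinite 𝒯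

/-- A torsion class: closed under quotients and extensions. -/
def IsTorsionClass (𝒯 : Set 𝒜) : Prop :=
  (∀ ⦃X Y : 𝒜⦄ (f : X ⟶ Y), Epi f → X ∈ 𝒯 → Y ∈ 𝒯) ∧
  (∀ S : ShortComplex 𝒜, S.ShortExact → S.X₁ ∈ 𝒯 → S.X₃ ∈ 𝒯 → S.X₂ ∈ 𝒯)

/-- additive closure: direct summands of finite direct sums of objects of `𝒞`. -/
def AddCl (𝒞 : Set 𝒜) : Set 𝒜 :=
  {X | ∃ (n : ℕ) (T : Fin n → 𝒜) (_ : ∀ i, T i ∈ 𝒞)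
        (s : ∀ i, X ⟶ T i) (r : ∀ i, T i ⟶ X), (∑ i, s i ≫ r i) = 𝟙 X}

/-- `Fac 𝒞`: factor objects of finite direct sums of objects of `𝒞`. -/
def FacCl (𝒞 : Set 𝒜) : Set 𝒜 :=
  {Y | ∃ X ∈ AddCl 𝒞, ∃ f : X ⟶ Y, Epi f}

/-- `Filt 𝒞`: objects with a finite filtration with subquotients in `add 𝒞`. -/
inductive FiltCl (𝒞 : Set 𝒜) : 𝒜 → Prop
  | zero (X : 𝒜) : IsZero X → FiltCl 𝒞 X
  | ext (S : ShortComplex 𝒜) : S.ShortExact → FiltCl 𝒞 S.X₁ → S.X₃ ∈ AddCl 𝒞 →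
      FiltCl 𝒞 S.X₂

/-- `Z` is Ext-projective in `𝒯`. -/
def ExtProjIn (𝒯 : Set 𝒜) (Z : 𝒜) : Prop :=
  Z ∈ 𝒯 ∧ ∀ S : ShortComplex 𝒜, S.ShortExact → S.X₁ ∈ 𝒯 → S.X₃ = Z →
    Nonempty S.Splitting

/-- support τ-tilting object, via the Adachi–Iyama–Reiten correspondence:
`Fac Z` is a functorially finite torsion class whose Ext-projectives are `add Z`. -/
def IsSupportTauTilting (Z : 𝒜) : Prop :=
  IsTorsionClass (FacCl {Z}) ∧ FunctoriallyFinite (FacCl {Z}) ∧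
  ∀ W : 𝒜, ExtProjIn (FacCl {Z}) W ↔ W ∈ AddCl {Z}

/-- a sincere subcategory: every simple object is a subquotient of some object. -/
def Sincere (𝒯 : Set 𝒜) : Prop :=
  ∀ S : 𝒜, Simple S → ∃ T ∈ 𝒯, ∃ (N : 𝒜) (i : N ⟶ T) (p : N ⟶ S), Mono i ∧ Epi p

def IsTauTilting (Z : 𝒜) : Prop :=
  IsSupportTauTilting Z ∧ Sincere (FacCl {Z})

def IsBrick (S : 𝒜) : Prop :=
  ¬ IsZero S ∧ ∀ f : S ⟶ S, f ≠ 0 → IsIso f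

def IsSemibrick (𝒮 : Set 𝒜) : Prop :=
  (∀ S ∈ 𝒮, IsBrick S) ∧
  ∀ S ∈ 𝒮, ∀ S' ∈ 𝒮, S ≠ S' → ∀ f : S ⟶ S', f = 0

end Paper


section Aux
open CategoryTheory CategoryTheory.Limits Paper

lemma isBrick_map {A : Type*} {B : Type*} [Category A] [Category B]
    [Abelian A] [Abelian B] (F : A ⥤ B) [F.Full] [F.Faithful] [F.Additive]
    {S : A} (h : IsBrick S) : IsBrick (F.obj S) := by
  constructor
  · intro hz
    apply h.1
    rw [IsZero.iff_id_eq_zero]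
    apply F.map_injective
    rw [F.map_id, F.map_zero]
    exact hz.eq_of_src _ _
  · intro f hf
    obtain ⟨g, rfl⟩ := F.map_surjective f
    have hg : g ≠ 0 := by rintro rfl; simp at hf
    have := h.2 g hg
    infer_instance

end Aux

open Paper in
/-- in a symmetric ladder of height 2 of module categories, if
`𝒮_X` is a semibrick in mod B and `𝒮_Y` a semibrick in mod C, then
`i₀ 𝒮_X ⊔ j₋₁ 𝒮_Y` is a semibrick in mod A. -/
theorem stmt6
    {k : Type} [Field k] {A B C : Type}
    [Ring A] [Algebra k A] [FiniteDimensional k A]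
    [Ring B] [Algebra k B] [FiniteDimensional k B]
    [Ring C] [Algebra k C] [FiniteDimensional k C]
    (i0 : ModuleCat.{0} B ⥤ ModuleCat.{0} A) (i1 im1 : ModuleCat.{0} A ⥤ ModuleCat.{0} B)
    (j0 : ModuleCat.{0} A ⥤ ModuleCat.{0} C) (j1 jm1 : ModuleCat.{0} C ⥤ ModuleCat.{0} A)
    (adjI1 : i1 ⊣ i0) (adjI0 : i0 ⊣ im1) (adjJ1 : j1 ⊣ j0) (adjJ0 : j0 ⊣ jm1)
    [i0.Full] [i0.Faithful] [jm1.Full] [jm1.Faithful] [j1.Full] [j1.Faithful]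
    [i0.Additive] [PreservesFiniteLimits i0] [PreservesFiniteColimits i0]
    [im1.Additive] [PreservesFiniteLimits im1] [PreservesFiniteColimits im1]
    [j0.Additive] [PreservesFiniteLimits j0] [PreservesFiniteColimits j0]
    [jm1.Additive] [PreservesFiniteLimits jm1] [PreservesFiniteColimits jm1]
    (himI : ∀ X : ModuleCat.{0} A, (∃ W, Nonempty (i0.obj W ≅ X)) ↔ IsZero (j0.obj X))
    (himJ : ∀ X : ModuleCat.{0} A, (∃ W, Nonempty (jm1.obj W ≅ X)) ↔ IsZero (im1.obj X))
    (SX : Set (ModuleCat.{0} B)) (SY : Set (ModuleCat.{0} C))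
    (hSX : IsSemibrick SX) (hSY : IsSemibrick SY) :
    IsSemibrick (i0.obj '' SX ∪ jm1.obj '' SY) := by
  have hzI : ∀ S : ModuleCat.{0} B, IsZero (j0.obj (i0.obj S)) :=
    fun S => (himI _).mp ⟨S, ⟨Iso.refl _⟩⟩
  have hzJ : ∀ T : ModuleCat.{0} C, IsZero (im1.obj (jm1.obj T)) :=
    fun T => (himJ _).mp ⟨T, ⟨Iso.refl _⟩⟩
  -- Hom(i0 S, jm1 T) = 0 via the adjunction j0 ⊣ jm1
  have key1 : ∀ (S : ModuleCat.{0} B) (T : ModuleCat.{0} C)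
      (f : i0.obj S ⟶ jm1.obj T), f = 0 := by
    intro S T f
    have h0 : (adjJ0.homEquiv _ _).symm f = 0 := (hzI S).eq_of_src _ _
    have : f = adjJ0.homEquiv _ _ ((adjJ0.homEquiv _ _).symm f) :=
      (Equiv.apply_symm_apply _ _).symm
    rw [this, h0]
    simp [Adjunction.homEquiv_apply]
  -- Hom(jm1 T, i0 S) = 0 via the image argument
  have key2 : ∀ (T : ModuleCat.{0} C) (S : ModuleCat.{0} B)
      (f : jm1.obj T ⟶ i0.obj S), f = 0 := by
    intro T S f
    have h2 : IsZero (im1.obj (image f)) :=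
      IsZero.of_epi (im1.map (factorThruImage f)) (hzJ T)
    obtain ⟨V, ⟨e⟩⟩ := (himJ _).mpr h2
    have h3 : IsZero (j0.obj (image f)) :=
      IsZero.of_mono (j0.map (image.ι f)) (hzI S)
    have hV : IsZero V :=
      h3.of_iso ((asIso (adjJ0.counit.app V)).symm ≪≫ j0.mapIso e)
    have hI : IsZero (image f) := (jm1.map_isZero hV).of_iso e.symm
    rw [← image.fac f, hI.eq_of_src (image.ι f) 0, comp_zero]
  constructor
  · rintro Z (⟨S, hS, rfl⟩ | ⟨T, hT, rfl⟩)
    · exact isBrick_map i0 (hSX.1 S hS)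
    · exact isBrick_map jm1 (hSY.1 T hT)
  · rintro Z (⟨S, hS, rfl⟩ | ⟨T, hT, rfl⟩) Z' (⟨S', hS', rfl⟩ | ⟨T', hT', rfl⟩) hne f
    · obtain ⟨g, rfl⟩ := i0.map_surjective f
      have : S ≠ S' := fun h => hne (by rw [h])
      rw [hSX.2 S hS S' hS' this g, i0.map_zero]
    · exact key1 S T' f
    · exact key2 T S' f
    · obtain ⟨g, rfl⟩ := jm1.map_surjective f
      have : T ≠ T' := fun h => hne (by rw [h])
      rw [hSY.2 T hT T' hT' this g, jm1.map_zero]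
end

section
/- Let B, C be finite-dimensional algebras, M a C-B-bimodule, A = [[B, 0], [M, C]]. If (M₁, …, M_r) is a complete forward hom-orthogonal sequence of bricks in mod B and (N₁, …, N_s) is a complete forward hom-orthogonal sequence in mod C, then the concatenation ((M₁,0), …, (M_r,0), (0,N₁)', …, (0,N_s)') — identifying B-modules and C-modules with A-modules via the canonical embeddings — is a complete forward hom-orthogonal sequence in mod A. -/
open CategoryTheory CategoryTheory.Limits

universe v u
namespace Tri
variable (B C M : Type) [Ring B] [Ring C]
  [AddCommGroup M] [Module B M] [Module C M] [SMulCommClass B C M]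

/-- the condition for `φ : Y → M → V` to correspond to a `B`-linear map `Y ⊗_C M → V`:
biadditive, `B`-linear in the second variable and `C`-balanced. -/
def IsBal {Y V : Type} [AddCommGroup Y] [Module C Y] [AddCommGroup V] [Module B V]
    (φ : Y → M → V) : Prop :=
  (∀ y y' m, φ (y + y') m = φ y m + φ y' m) ∧
  (∀ y m m', φ y (m + m') = φ y m + φ y m') ∧
  (∀ (b : B) y m, φ y (b • m) = b • φ y m) ∧
  (∀ (c : C) y m, φ (c • y) m = φ y (c • m))

/-- a right module over the triangular matrix algebra `A = [[B,0],[M,C]]`, presented as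
a triple `(X, Y)_φ` where `φ` encodes the `B`-linear map `Y ⊗_C M → X`. -/
structure Trip where
  X : Type
  [addX : AddCommGroup X]
  [modX : Module B X]
  Y : Type
  [addY : AddCommGroup Y]
  [modY : Module C Y]
  φ : Y → M → X
  bal : IsBal B C M φ

attribute [instance] Trip.addX Trip.modX Trip.addY Trip.modY

variable {B C M}

/-- morphisms of triples: pairs `(α, β)` compatible with the structure maps. -/
structure Hom (T T' : Trip B C M) where
  α : T.X →ₗ[B] T'.X
  β : T.Y →ₗ[C] T'.Y
  comm : ∀ y m, α (T.φ y m) = T'.φ (β y) m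

def Hom.comp {T₁ T₂ T₃ : Trip B C M} (f : Hom T₁ T₂) (g : Hom T₂ T₃) : Hom T₁ T₃ :=
  ⟨g.α ∘ₗ f.α, g.β ∘ₗ f.β, fun y m => by
    simp only [LinearMap.comp_apply, f.comm, g.comm]⟩

def Hom.idH (T : Trip B C M) : Hom T T := ⟨LinearMap.id, LinearMap.id, fun _ _ => rfl⟩

def Hom.add {T T' : Trip B C M} (f g : Hom T T') : Hom T T' :=
  ⟨f.α + g.α, f.β + g.β, fun y m => by
    simp only [LinearMap.add_apply, f.comm, g.comm, (T'.bal).1]⟩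

def Hom.Surj {T T' : Trip B C M} (f : Hom T T') : Prop :=
  Function.Surjective f.α ∧ Function.Surjective f.β

/-- a short exact sequence of triples (exactness is componentwise). -/
structure SES (T₁ T₂ T₃ : Trip B C M) where
  f : Hom T₁ T₂
  g : Hom T₂ T₃
  injα : Function.Injective f.α
  injβ : Function.Injective f.β
  surjα : Function.Surjective g.α
  surjβ : Function.Surjective g.β
  exactα : LinearMap.range f.α = LinearMap.ker g.α
  exactβ : LinearMap.range f.β = LinearMap.ker g.β

def SES.Splits {T₁ T₂ T₃ : Trip B C M} (s : SES T₁ T₂ T₃) : Prop :=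
  ∃ r : Hom T₂ T₁, r.α ∘ₗ s.f.α = LinearMap.id ∧ r.β ∘ₗ s.f.β = LinearMap.id

/-- torsion class of triples: closed under quotients and extensions. -/
def TorsCl (𝒯 : Set (Trip B C M)) : Prop :=
  (∀ T T' : Trip B C M, ∀ f : Hom T T', f.Surj → T ∈ 𝒯 → T' ∈ 𝒯) ∧
  (∀ T₁ T₂ T₃ : Trip B C M, SES T₁ T₂ T₃ → T₁ ∈ 𝒯 → T₃ ∈ 𝒯 → T₂ ∈ 𝒯)

/-- additive closure in the category of triples. -/
def AddT (𝒞 : Set (Trip B C M)) : Set (Trip B C M) :=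
  {T | ∃ (n : ℕ) (G : Fin n → Trip B C M) (_ : ∀ i, G i ∈ 𝒞)
        (s : ∀ i, Hom T (G i)) (r : ∀ i, Hom (G i) T),
      (∑ i, (r i).α ∘ₗ (s i).α) = LinearMap.id ∧
      (∑ i, (r i).β ∘ₗ (s i).β) = LinearMap.id}

/-- `Fac` in the category of triples: quotients of finite direct sums, i.e. jointly
surjective finite families of maps from objects of `𝒞`. -/
def FacT (𝒞 : Set (Trip B C M)) : Set (Trip B C M) :=
  {T | ∃ (n : ℕ) (G : Fin n → Trip B C M) (_ : ∀ i, G i ∈ 𝒞) (f : ∀ i, Hom (G i) T),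
      (⨆ i, LinearMap.range (f i).α) = ⊤ ∧ (⨆ i, LinearMap.range (f i).β) = ⊤}

def LeftApproxT (𝒯 : Set (Trip B C M)) {T T' : Trip B C M} (f : Hom T T') : Prop :=
  T' ∈ 𝒯 ∧ ∀ W, W ∈ 𝒯 → ∀ g : Hom T W, ∃ h : Hom T' W, Hom.comp f h = g

def RightApproxT (𝒯 : Set (Trip B C M)) {T' T : Trip B C M} (f : Hom T' T) : Prop :=
  T' ∈ 𝒯 ∧ ∀ W, W ∈ 𝒯 → ∀ g : Hom W T, ∃ h : Hom W T', Hom.comp h f = g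

def CovFinT (𝒯 : Set (Trip B C M)) : Prop :=
  ∀ T : Trip B C M, ∃ (T' : Trip B C M) (f : Hom T T'), LeftApproxT 𝒯 f

def ContraFinT (𝒯 : Set (Trip B C M)) : Prop :=
  ∀ T : Trip B C M, ∃ (T' : Trip B C M) (f : Hom T' T), RightApproxT 𝒯 f

def FunctFinT (𝒯 : Set (Trip B C M)) : Prop := CovFinT 𝒯 ∧ ContraFinT 𝒯

def ExtProjT (𝒯 : Set (Trip B C M)) (Z : Trip B C M) : Prop :=
  Z ∈ 𝒯 ∧ ∀ T₁ T₂ : Trip B C M, ∀ s : SES T₁ T₂ Z, T₁ ∈ 𝒯 → s.Splits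

/-- support τ-tilting triple, via the Adachi–Iyama–Reiten correspondence. -/
def STauTiltT (Z : Trip B C M) : Prop :=
  TorsCl (FacT {Z}) ∧ FunctFinT (FacT {Z}) ∧
  ∀ W : Trip B C M, ExtProjT (FacT {Z}) W ↔ W ∈ AddT {Z}

/-- a module is sincere if every simple module is one of its subquotients
(equivalently, a composition factor). -/
def SincereMod (R : Type) [Ring R] (V : Type) [AddCommGroup V] [Module R V] : Prop :=
  ∀ (S : Type) [AddCommGroup S] [Module R S], IsSimpleModule R S →
    ∃ (N : Submodule R V) (P : Submodule R ↥N), Nonempty ((↥N ⧸ P) ≃ₗ[R] S)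

/-- τ-tilting triple: support τ-tilting and sincere (equivalently, corresponding to a
sincere functorially finite torsion class). -/
def TauTiltT (Z : Trip B C M) : Prop :=
  STauTiltT Z ∧ SincereMod B Z.X ∧ SincereMod C Z.Y

/-- `^⊥(τ Z)` via the AIR characterization:
`N ∈ ^⊥(τZ)` iff `Ext¹(Z, Fac N) = 0`. -/
def PerpTauT (Z : Trip B C M) : Set (Trip B C M) :=
  {N | ∀ T₁ T₂ : Trip B C M, ∀ s : SES T₁ T₂ Z, T₁ ∈ FacT {N} → s.Splits}

def TripBrick (T : Trip B C M) : Prop :=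
  (¬ (Subsingleton T.X ∧ Subsingleton T.Y)) ∧
  ∀ e : Hom T T, ¬ (e.α = 0 ∧ e.β = 0) →
    ∃ e' : Hom T T, e'.α ∘ₗ e.α = LinearMap.id ∧ e.α ∘ₗ e'.α = LinearMap.id ∧
      e'.β ∘ₗ e.β = LinearMap.id ∧ e.β ∘ₗ e'.β = LinearMap.id

variable (B C M)

/-- the embedding of a `B`-module as the triple `(V, 0)`. -/
def ofB (V : Type) [AddCommGroup V] [Module B V] : Trip B C M :=
  { X := V, Y := PUnit, φ := fun _ _ => 0,
    bal := ⟨fun _ _ _ => by simp, fun _ _ _ => by simp,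
            fun _ _ _ => by simp, fun _ _ _ => by simp⟩ }

/-- the embedding of a `C`-module as the triple `(0, W)`. -/
def ofC (W : Type) [AddCommGroup W] [Module C W] : Trip B C M :=
  { X := PUnit, Y := W, φ := fun _ _ => 0,
    bal := ⟨fun _ _ _ => by simp, fun _ _ _ => by simp,
            fun _ _ _ => by simp, fun _ _ _ => by simp⟩ }

/-- the triple `(V, 0) ⊕ (X', Y')_φ`, realized as `(V × X', Y')`. -/
def sumB (V : Type) [AddCommGroup V] [Module B V] (T : Trip B C M) : Trip B C M :=
  { X := V × T.X, Y := T.Y, φ := fun y m => (0, T.φ y m),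
    bal := ⟨fun y y' m => by simp [T.bal.1, Prod.ext_iff],
            fun y m m' => by simp [T.bal.2.1, Prod.ext_iff],
            fun b y m => by simp [T.bal.2.2.1, Prod.ext_iff],
            fun c y m => by simp [T.bal.2.2.2]⟩ }

/-- `φ : Y → M → V` is a minimal left `Fac X`-approximation of `Y ⊗_C M`
(approximation property phrased via balanced maps, which correspond to `B`-linear maps
out of `Y ⊗_C M`). -/
def IsMinLeftFacApprox (X : ModuleCat.{0} B) (Y : ModuleCat.{0} C)
    (V : Type) [AddCommGroup V] [Module B V] (φ : ↥Y → M → V) : Prop :=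
  IsBal B C M φ ∧
  (ModuleCat.of B V ∈ Paper.FacCl ({X} : Set (ModuleCat.{0} B))) ∧
  (∀ W : ModuleCat.{0} B, W ∈ Paper.FacCl ({X} : Set (ModuleCat.{0} B)) →
    ∀ ψ : ↥Y → M → ↥W, IsBal B C M ψ →
      ∃ h : V →ₗ[B] ↥W, ∀ y m, h (φ y m) = ψ y m) ∧
  (∀ g : V →ₗ[B] V, (∀ y m, g (φ y m) = φ y m) → Function.Bijective g)

end Tri

open Paper in
/-- a complete forward hom-orthogonal sequence of bricks in `Mod R`. -/
def IsCFHOMod (R : Type) [Ring R] (n : ℕ) (L : Fin n → ModuleCat.{0} R) : Prop :=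
  ((∀ i, IsBrick (L i)) ∧ ∀ i j : Fin n, i < j → ∀ f : L i ⟶ L j, f = 0) ∧
  ¬ ∃ (p : Fin (n + 1)) (S : ModuleCat.{0} R), IsBrick S ∧
      (∀ i : Fin n, (i : ℕ) < (p : ℕ) → ∀ f : L i ⟶ S, f = 0) ∧
      (∀ j : Fin n, (p : ℕ) ≤ (j : ℕ) → ∀ f : S ⟶ L j, f = 0)

open Tri in
/-- a complete forward hom-orthogonal sequence of bricks in the category of triples. -/
def IsCFHOT
    {B C M : Type} [Ring B] [Ring C]
    [AddCommGroup M] [Module B M] [Module C M] [SMulCommClass B C M]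
    (n : ℕ) (L : Fin n → Trip B C M) : Prop :=
  ((∀ i, TripBrick (L i)) ∧
    ∀ i j : Fin n, i < j → ∀ e : Hom (L i) (L j), e.α = 0 ∧ e.β = 0) ∧
  ¬ ∃ (p : Fin (n + 1)) (S : Trip B C M), TripBrick S ∧
      (∀ i : Fin n, (i : ℕ) < (p : ℕ) → ∀ e : Hom (L i) S, e.α = 0 ∧ e.β = 0) ∧
      (∀ j : Fin n, (p : ℕ) ≤ (j : ℕ) → ∀ e : Hom S (L j), e.α = 0 ∧ e.β = 0)

/-!
Hom-orthogonality of the concatenation is inherited from the two halves, because a triple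
`(X, 0)` maps to `(0, Y)` only by zero. For completeness, suppose a brick `S = (X, Y)` could
be inserted at position `p`. If `p ≤ r` and `Y = 0`, then `S` is just a brick of `mod B` that
could be inserted into `(Mᵢ)`; if `Y ≠ 0`, a simple quotient `T` of `Y` satisfies
`Hom(T, Nⱼ) = 0` for all `j`, since maps `S → (0, Nⱼ)` are exactly maps `Y → Nⱼ`, so `T`
could be put in front of `(Nⱼ)`. The case `p > r` is dual, with a simple submodule of `X`
appended to `(Mᵢ)`. Nonzero modules over a finite-dimensional algebra have simple quotients
because its Jacobson radical is nilpotent.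
-/

open CategoryTheory Paper Tri

theorem IsSemiprimaryRing.jacobson_smul_top_ne_top {R Y : Type} [Ring R] [IsSemiprimaryRing R]
    [AddCommGroup Y] [Module R Y] [Nontrivial Y] :
    Ring.jacobson R • (⊤ : Submodule R Y) ≠ ⊤ := by
  intro h
  have hpow : ∀ n : ℕ, Ring.jacobson R ^ n • (⊤ : Submodule R Y) = ⊤ := by
    intro n
    induction n with
    | zero => rw [Submodule.pow_zero, Ideal.one_eq_top, Submodule.top_smul]
    | succ n ih => rw [Ideal.IsTwoSided.pow_succ, Submodule.mul_smul, ih, h]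
  obtain ⟨n, hn⟩ := IsSemiprimaryRing.isNilpotent (R := R)
  have h_bot := hpow n
  rw [hn, Submodule.zero_eq_bot, Submodule.bot_smul] at h_bot
  exact bot_ne_top h_bot

theorem exists_surjective_to_isSimpleModule {R Y : Type} [Ring R] [IsSemiprimaryRing R]
    [AddCommGroup Y] [Module R Y] [Nontrivial Y] :
    ∃ (T : ModuleCat.{0} R) (π : Y →ₗ[R] T),
      IsSimpleModule R T ∧ Function.Surjective π := by
  set J := Ring.jacobson R
  set Q := Y ⧸ J • (⊤ : Submodule R Y)
  have : Nontrivial Q :=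
    Submodule.Quotient.nontrivial_iff.mpr IsSemiprimaryRing.jacobson_smul_top_ne_top
  -- `Q` is a module over the semisimple ring `R ⧸ J`, with the same submodules.
  have : IsSemisimpleModule R Q := by
    let l : Q →ₛₗ[Ideal.Quotient.mk J] Q :=
      { toFun := id
        map_add' := fun _ _ => rfl
        map_smul' := fun _ q => by
          obtain ⟨y, rfl⟩ := Submodule.Quotient.mk_surjective _ q
          rfl }
    exact (l.isSemisimpleModule_iff_of_bijective Function.bijective_id).mpr inferInstance
  obtain ⟨m, hm, -⟩ :=
    (eq_top_or_exists_le_coatom (⊥ : Submodule R Q)).resolve_left bot_ne_top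
  exact ⟨ModuleCat.of R (Q ⧸ m), m.mkQ ∘ₗ (J • ⊤ : Submodule R Y).mkQ,
    isSimpleModule_iff_isCoatom.mpr hm, m.mkQ_surjective.comp (Submodule.mkQ_surjective _)⟩

theorem exists_injective_from_isSimpleModule {R X : Type} [Ring R] [IsArtinianRing R]
    [AddCommGroup X] [Module R X] [Nontrivial X] :
    ∃ (T : ModuleCat.{0} R) (ι : T →ₗ[R] X),
      IsSimpleModule R T ∧ Function.Injective ι := by
  obtain ⟨x, hx⟩ := exists_ne (0 : X)
  set N := R ∙ x
  have : Nontrivial N := Submodule.nontrivial_iff_ne_bot.mpr (by simpa [N] using hx)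
  obtain ⟨m, hm, -⟩ := (eq_bot_or_exists_atom_le (⊤ : Submodule R N)).resolve_left top_ne_bot
  exact ⟨ModuleCat.of R m, N.subtype ∘ₗ m.subtype, isSimpleModule_iff_isAtom.mpr hm,
    N.injective_subtype.comp m.injective_subtype⟩

namespace ModuleCat

variable {R : Type} [Ring R]

theorem isBrick_iff (V : ModuleCat.{0} R) :
    IsBrick V ↔ Nontrivial V ∧ ∀ f : V →ₗ[R] V, f ≠ 0 → Function.Bijective f := by
  rw [IsBrick, isZero_iff_subsingleton, not_subsingleton_iff_nontrivial]
  refine and_congr_right' ⟨fun h f hf => ?_, fun h f hf => ?_⟩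
  · exact (ConcreteCategory.isIso_iff_bijective (ofHom f)).mp
      (h _ fun h0 => hf (congrArg Hom.hom h0))
  · exact (ConcreteCategory.isIso_iff_bijective f).mpr (h f.hom fun h0 => hf (hom_ext h0))

theorem isBrick_of_isSimpleModule (T : ModuleCat.{0} R) [IsSimpleModule R T] : IsBrick T :=
  (isBrick_iff T).mpr
    ⟨IsSimpleModule.nontrivial R T, fun _ hf => LinearMap.bijective_of_ne_zero hf⟩

end ModuleCat

namespace IsCFHOMod

variable {R : Type} [Ring R] {n : ℕ} {L : Fin n → ModuleCat.{0} R}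

theorem not_insert (h : IsCFHOMod R n L) (p : Fin (n + 1)) {S : ModuleCat.{0} R}
    (hS : IsBrick S) (hl : ∀ i : Fin n, (i : ℕ) < p → ∀ f : L i →ₗ[R] S, f = 0)
    (hr : ∀ j : Fin n, (p : ℕ) ≤ j → ∀ f : S →ₗ[R] L j, f = 0) : False :=
  h.2 ⟨p, S, hS, fun i hi f => ModuleCat.hom_ext (hl i hi f.hom),
    fun j hj f => ModuleCat.hom_ext (hr j hj f.hom)⟩

theorem exists_linearMap_to_ne_zero [IsSemiprimaryRing R] (h : IsCFHOMod R n L) (Y : Type)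
    [AddCommGroup Y] [Module R Y] [Nontrivial Y] : ∃ j, ∃ g : Y →ₗ[R] L j, g ≠ 0 := by
  obtain ⟨T, π, hT, hπ⟩ := exists_surjective_to_isSimpleModule (R := R) (Y := Y)
  by_contra! h0
  refine h.not_insert 0 (ModuleCat.isBrick_of_isSimpleModule T)
    (fun i hi => absurd hi (Nat.not_lt_zero _)) fun j _ f => ?_
  exact (LinearMap.cancel_right hπ).mp ((h0 j (f ∘ₗ π)).trans (LinearMap.zero_comp π).symm)

theorem exists_linearMap_from_ne_zero [IsArtinianRing R] (h : IsCFHOMod R n L) (X : Type)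
    [AddCommGroup X] [Module R X] [Nontrivial X] : ∃ i, ∃ f : L i →ₗ[R] X, f ≠ 0 := by
  obtain ⟨T, ι, hT, hι⟩ := exists_injective_from_isSimpleModule (R := R) (X := X)
  by_contra! h0
  refine h.not_insert (Fin.last n) (ModuleCat.isBrick_of_isSimpleModule T) (fun i _ f => ?_)
    fun j hj => absurd hj (by simp)
  exact (LinearMap.cancel_left hι).mp ((h0 i (ι ∘ₗ f)).trans (LinearMap.comp_zero ι).symm)

end IsCFHOMod

namespace Tri

variable {B C M : Type} [Ring B] [Ring C] [AddCommGroup M] [Module B M] [Module C M]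

theorem Trip.φ_zero_left (T : Trip B C M) (m : M) : T.φ 0 m = 0 := by
  simpa using T.bal.1 0 0 m

instance (V : Type) [AddCommGroup V] [Module B V] : Subsingleton (ofB B C M V).Y :=
  inferInstanceAs (Subsingleton PUnit)

instance (W : Type) [AddCommGroup W] [Module C W] : Subsingleton (ofC B C M W).X :=
  inferInstanceAs (Subsingleton PUnit)

def Hom.ofα {T T' : Trip B C M} [Subsingleton T.Y] (f : T.X →ₗ[B] T'.X) : Hom T T' :=
  ⟨f, 0, fun y m => by
    rw [Subsingleton.elim y 0, T.φ_zero_left, map_zero, LinearMap.zero_apply, T'.φ_zero_left]⟩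

def Hom.ofβ {T T' : Trip B C M} [Subsingleton T'.X] (g : T.Y →ₗ[C] T'.Y) : Hom T T' :=
  ⟨0, g, fun _ _ => Subsingleton.elim _ _⟩

def HomZero (T T' : Trip B C M) : Prop :=
  ∀ e : Hom T T', e.α = 0 ∧ e.β = 0

theorem homZero_iff_of_subsingleton_Y {T T' : Trip B C M} [Subsingleton T.Y] :
    HomZero T T' ↔ ∀ f : T.X →ₗ[B] T'.X, f = 0 :=
  ⟨fun h f => (h (Hom.ofα f)).1, fun h e => ⟨h e.α, Subsingleton.elim _ _⟩⟩

theorem homZero_iff_of_subsingleton_X {T T' : Trip B C M} [Subsingleton T'.X] :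
    HomZero T T' ↔ ∀ g : T.Y →ₗ[C] T'.Y, g = 0 :=
  ⟨fun h g => (h (Hom.ofβ g)).2, fun h e => ⟨Subsingleton.elim _ _, h e.β⟩⟩

theorem tripBrick_iff_isBrick_X (T : Trip B C M) [Subsingleton T.Y] :
    TripBrick T ↔ IsBrick (ModuleCat.of B T.X) := by
  rw [ModuleCat.isBrick_iff, TripBrick]
  refine and_congr (by simp only [iff_true_intro ‹Subsingleton T.Y›, and_true,
    not_subsingleton_iff_nontrivial]) ⟨fun h f hf => ?_, fun h e he => ?_⟩
  · obtain ⟨e', hl, hr, -⟩ := h (Hom.ofα f) fun h0 => hf h0.1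
    exact Function.bijective_iff_has_inverse.mpr
      ⟨e'.α, LinearMap.congr_fun hl, LinearMap.congr_fun hr⟩
  · have hα : e.α ≠ 0 := fun h0 => he ⟨h0, Subsingleton.elim _ _⟩
    let g := LinearEquiv.ofBijective e.α (h e.α hα)
    exact ⟨Hom.ofα g.symm.toLinearMap, LinearMap.ext g.symm_apply_apply,
      LinearMap.ext g.apply_symm_apply, Subsingleton.elim _ _, Subsingleton.elim _ _⟩

theorem tripBrick_iff_isBrick_Y (T : Trip B C M) [Subsingleton T.X] :
    TripBrick T ↔ IsBrick (ModuleCat.of C T.Y) := by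
  rw [ModuleCat.isBrick_iff, TripBrick]
  refine and_congr (by simp only [iff_true_intro ‹Subsingleton T.X›, true_and,
    not_subsingleton_iff_nontrivial]) ⟨fun h f hf => ?_, fun h e he => ?_⟩
  · obtain ⟨e', -, -, hl, hr⟩ := h (Hom.ofβ f) fun h0 => hf h0.2
    exact Function.bijective_iff_has_inverse.mpr
      ⟨e'.β, LinearMap.congr_fun hl, LinearMap.congr_fun hr⟩
  · have hβ : e.β ≠ 0 := fun h0 => he ⟨Subsingleton.elim _ _, h0⟩
    let g := LinearEquiv.ofBijective e.β (h e.β hβ)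
    exact ⟨Hom.ofβ g.symm.toLinearMap, Subsingleton.elim _ _, Subsingleton.elim _ _,
      LinearMap.ext g.symm_apply_apply, LinearMap.ext g.apply_symm_apply⟩

section Concat

variable {r s : ℕ} (Ms : Fin r → ModuleCat.{0} B) (Ns : Fin s → ModuleCat.{0} C)

variable (M) in
def concat : Fin (r + s) → Trip B C M := fun i =>
  if h : (i : ℕ) < r then ofB B C M (Ms ⟨i, h⟩)
  else ofC B C M (Ns ⟨i - r, Nat.sub_lt_left_of_lt_add (not_lt.mp h) i.isLt⟩)

@[simp]
theorem concat_castAdd (i : Fin r) : concat M Ms Ns (Fin.castAdd s i) = ofB B C M (Ms i) := by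
  simp [concat]

@[simp]
theorem concat_natAdd (j : Fin s) : concat M Ms Ns (Fin.natAdd r j) = ofC B C M (Ns j) := by
  simp only [concat, Fin.val_natAdd, add_lt_iff_neg_left, Nat.not_lt_zero, dite_false]
  exact congrArg (fun t => ofC B C M (Ns t)) (Fin.ext (Nat.add_sub_cancel_left r j))

variable {Ms Ns}

theorem tripBrick_concat (hM : ∀ i, IsBrick (Ms i)) (hN : ∀ j, IsBrick (Ns j))
    (i : Fin (r + s)) : TripBrick (concat M Ms Ns i) := by
  induction i using Fin.addCases with
  | left i => rw [concat_castAdd]; exact (tripBrick_iff_isBrick_X _).mpr (hM i)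
  | right j => rw [concat_natAdd]; exact (tripBrick_iff_isBrick_Y _).mpr (hN j)

theorem homZero_concat (hM : ∀ i j : Fin r, i < j → ∀ f : Ms i ⟶ Ms j, f = 0)
    (hN : ∀ i j : Fin s, i < j → ∀ f : Ns i ⟶ Ns j, f = 0) (i j : Fin (r + s))
    (hij : i < j) :
    HomZero (concat M Ms Ns i) (concat M Ms Ns j) := by
  induction i using Fin.addCases with
  | left i =>
    induction j using Fin.addCases with
    | left j =>
      rw [concat_castAdd, concat_castAdd, homZero_iff_of_subsingleton_Y]
      exact fun f => congrArg ModuleCat.Hom.hom (hM i j hij (ModuleCat.ofHom f))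
    | right j =>
      rw [concat_castAdd, concat_natAdd, homZero_iff_of_subsingleton_Y]
      exact fun _ => Subsingleton.elim _ _
  | right i =>
    induction j using Fin.addCases with
    | left j =>
      have := Fin.lt_def.mp hij
      simp only [Fin.val_natAdd, Fin.val_castAdd] at this
      omega
    | right j =>
      rw [concat_natAdd, concat_natAdd, homZero_iff_of_subsingleton_X]
      exact fun g => congrArg ModuleCat.Hom.hom
        (hN i j ((Fin.natAdd_lt_natAdd_iff r).mp hij) (ModuleCat.ofHom g))

theorem not_insert_concat [IsArtinianRing B] [IsArtinianRing C] (hM : IsCFHOMod B r Ms)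
    (hN : IsCFHOMod C s Ns) (p : Fin (r + s + 1)) (S : Trip B C M) (hS : TripBrick S)
    (hl : ∀ i : Fin (r + s), (i : ℕ) < p → HomZero (concat M Ms Ns i) S)
    (hr : ∀ j : Fin (r + s), (p : ℕ) ≤ j → HomZero S (concat M Ms Ns j)) : False := by
  have hlB (i : Fin r) (hi : (i : ℕ) < p) : HomZero (ofB B C M (Ms i)) S := by
    simpa using hl (Fin.castAdd s i) hi
  have hlC (j : Fin s) (hj : r + (j : ℕ) < p) : HomZero (ofC B C M (Ns j)) S := by
    simpa using hl (Fin.natAdd r j) hj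
  have hrB (i : Fin r) (hi : (p : ℕ) ≤ i) : HomZero S (ofB B C M (Ms i)) := by
    simpa using hr (Fin.castAdd s i) hi
  have hrC (j : Fin s) (hj : (p : ℕ) ≤ r + j) : HomZero S (ofC B C M (Ns j)) := by
    simpa using hr (Fin.natAdd r j) hj
  rcases le_or_gt (p : ℕ) r with hp | hp
  · rcases subsingleton_or_nontrivial S.Y with hY | hY
    · exact hM.not_insert ⟨p, by omega⟩ ((tripBrick_iff_isBrick_X S).mp hS)
        (fun i hi => homZero_iff_of_subsingleton_Y.mp (hlB i hi))
        (fun i hi => homZero_iff_of_subsingleton_Y.mp (hrB i hi))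
    · obtain ⟨j, g, hg⟩ := hN.exists_linearMap_to_ne_zero S.Y
      exact hg (homZero_iff_of_subsingleton_X.mp (hrC j (by omega)) g)
  · rcases subsingleton_or_nontrivial S.X with hX | hX
    · exact hN.not_insert ⟨p - r, by omega⟩ ((tripBrick_iff_isBrick_Y S).mp hS)
        (fun j hj => homZero_iff_of_subsingleton_X.mp (hlC j (by simp only at hj; omega)))
        (fun j hj => homZero_iff_of_subsingleton_X.mp (hrC j (by simp only at hj; omega)))
    · obtain ⟨i, f, hf⟩ := hM.exists_linearMap_from_ne_zero S.X
      exact hf (homZero_iff_of_subsingleton_Y.mp (hlB i (by omega)) f)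

theorem isCFHOT_concat [SMulCommClass B C M] [IsArtinianRing B] [IsArtinianRing C]
    (hM : IsCFHOMod B r Ms) (hN : IsCFHOMod C s Ns) : IsCFHOT (r + s) (concat M Ms Ns) :=
  ⟨⟨tripBrick_concat hM.1.1 hN.1.1, homZero_concat hM.1.2 hN.1.2⟩,
    fun ⟨p, S, hS, hl, hr⟩ => not_insert_concat hM hN p S hS hl hr⟩

end Concat

end Tri

open Paper Tri in
/-- complete forward hom-orthogonal sequences in `mod B` and `mod C`
concatenate (via the embeddings `X ↦ (X,0)` and `Y ↦ (0,Y)`) to a complete forward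
hom-orthogonal sequence in `mod A` for `A = [[B,0],[M,C]]`. -/
theorem stmt16
    {k : Type} [Field k] {B C M : Type}
    [Ring B] [Algebra k B] [FiniteDimensional k B]
    [Ring C] [Algebra k C] [FiniteDimensional k C]
    [AddCommGroup M] [Module B M] [Module C M] [SMulCommClass B C M]
    (r s : ℕ) (Ms : Fin r → ModuleCat.{0} B) (Ns : Fin s → ModuleCat.{0} C)
    (hM : IsCFHOMod B r Ms) (hN : IsCFHOMod C s Ns) :
    IsCFHOT (r + s) (fun i : Fin (r + s) =>
      if h : (i : ℕ) < r then ofB B C M ↥(Ms ⟨(i : ℕ), h⟩)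
      else ofC B C M ↥(Ns ⟨(i : ℕ) - r, by have := i.isLt; omega⟩)) := by
  have : IsArtinianRing B := isArtinian_of_tower k inferInstance
  have : IsArtinianRing C := isArtinian_of_tower k inferInstance
  exact isCFHOT_concat hM hN
end

section
/- Let 𝒯 be a full subcategory of an abelian category 𝒜 with enough injectives, closed under extensions, and let f : X → T be a minimal left 𝒯-approximation of X. Then coker f is Ext-orthogonal to 𝒯 on the left: Ext¹(coker f, T') = 0 for all T' ∈ 𝒯 (dual Wakamatsu lemma). Consequently, if 𝒯 = Fac X₀ for a τ-tilting module X₀ over a finite-dimensional algebra, coker f belongs to add X₀. -/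
open CategoryTheory CategoryTheory.Limits

universe v u
open Paper in
/-- dual Wakamatsu lemma: if `𝒯` is an extension-closed full subcategory
of an abelian category with enough injectives and `f : X ⟶ T` is a minimal left
`𝒯`-approximation, then `Ext¹(coker f, T') = 0` for all `T' ∈ 𝒯` (every short exact
sequence `0 → T' → E → coker f → 0` with `T' ∈ 𝒯` splits).  Consequently, if
`𝒯 = Fac X₀` for a τ-tilting module `X₀`, then `coker f ∈ add X₀`. -/
theorem stmt17 {𝒜 : Type u} [Category.{v} 𝒜] [Abelian 𝒜] [EnoughInjectives 𝒜]
    (𝒯 : Set 𝒜)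
    (hext : ∀ S : ShortComplex 𝒜, S.ShortExact → S.X₁ ∈ 𝒯 → S.X₃ ∈ 𝒯 → S.X₂ ∈ 𝒯)
    {X T : 𝒜} (f : X ⟶ T) (hf : IsMinimalLeftApprox 𝒯 f) :
    (∀ S : ShortComplex 𝒜, S.ShortExact → S.X₁ ∈ 𝒯 → S.X₃ = cokernel f →
      Nonempty S.Splitting) ∧
    (∀ X₀ : 𝒜, IsTauTilting X₀ → 𝒯 = FacCl {X₀} → cokernel f ∈ AddCl {X₀}) := by
  have key : ∀ S : ShortComplex 𝒜, S.ShortExact → S.X₁ ∈ 𝒯 → S.X₃ = cokernel f →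
      Nonempty S.Splitting := by
    intro S hS h1 h3
    obtain @⟨T', E, Cc, ι, π, w⟩ := S
    dsimp at h3 h1
    subst h3
    have hmono : Mono ι := hS.mono_f
    have hepi : Epi π := hS.epi_g
    have hT𝒯 : T ∈ 𝒯 := hf.1.1
    set p : T ⟶ cokernel f := cokernel.π f with hp
    have hfst : pullback.fst p π ≫ p = pullback.snd p π ≫ π := pullback.condition
    have hι'cond : (0 : T' ⟶ T) ≫ p = ι ≫ π := by simpa using w.symm
    obtain ⟨ι', hι'fst, hι'snd⟩ :
        ∃ ι' : T' ⟶ pullback p π, ι' ≫ pullback.fst p π = 0 ∧ ι' ≫ pullback.snd p π = ι :=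
      ⟨pullback.lift 0 ι hι'cond, pullback.lift_fst _ _ _, pullback.lift_snd _ _ _⟩
    have hmonoι' : Mono ι' := by
      constructor
      intro W a b hab
      have h2 : a ≫ ι' ≫ pullback.snd p π = b ≫ ι' ≫ pullback.snd p π := by
        rw [← Category.assoc, ← Category.assoc, hab]
      rw [hι'snd] at h2
      exact (cancel_mono ι).1 h2
    -- the canonical factorization through ι' of maps killed by fst
    have hfac : ∀ {W : 𝒜} (k : W ⟶ pullback p π) (hk : k ≫ pullback.fst p π = 0),
        (hS.exact.lift (k ≫ pullback.snd p π)
          (by rw [Category.assoc, ← hfst, ← Category.assoc, hk, zero_comp])) ≫ ι' = k := by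
      intro W k hk
      apply pullback.hom_ext
      · rw [Category.assoc, hι'fst, comp_zero, hk]
      · rw [Category.assoc, hι'snd]
        exact hS.exact.lift_f _ _
    have hS'se : (ShortComplex.mk ι' (pullback.fst p π)
        (by simpa using hι'fst)).ShortExact := by
      have hepi' : Epi (pullback.fst p π) := by infer_instance
      have hker : IsLimit (KernelFork.ofι ι' (show ι' ≫ pullback.fst p π = 0 from hι'fst)) := by
        refine KernelFork.IsLimit.ofι _ _
          (fun {W} k hk => hS.exact.lift (k ≫ pullback.snd p π)
            (by rw [Category.assoc, ← hfst, ← Category.assoc, hk, zero_comp]))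
          (fun {W} k hk => hfac k hk) ?_
        intro W k hk m hm
        rw [← cancel_mono ι', hm, hfac k hk]
      refine { exact := ?_, mono_f := hmonoι', epi_g := by dsimp; infer_instance }
      exact ShortComplex.exact_of_f_is_kernel _ hker
    have hY𝒯 : pullback p π ∈ 𝒯 := hext _ hS'se h1 hT𝒯
    have hfp : f ≫ p = (0 : X ⟶ E) ≫ π := by simp [hp]
    obtain ⟨h, hh⟩ := hf.1.2 hY𝒯 (pullback.lift f 0 hfp)
    have hhfst : f ≫ h ≫ pullback.fst p π = f := by
      rw [← Category.assoc, hh, pullback.lift_fst]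
    have hiso : IsIso (h ≫ pullback.fst p π) := hf.2 _ hhfst
    obtain ⟨s, hs⟩ : ∃ s : T ⟶ pullback p π, s = inv (h ≫ pullback.fst p π) ≫ h := ⟨_, rfl⟩
    have hsfst : s ≫ pullback.fst p π = 𝟙 T := by
      rw [hs, Category.assoc, IsIso.inv_hom_id]
    obtain ⟨t, ht⟩ : ∃ t : T ⟶ E, t = s ≫ pullback.snd p π := ⟨_, rfl⟩
    have htπ : t ≫ π = p := by
      rw [ht, Category.assoc, ← hfst, ← Category.assoc, hsfst, Category.id_comp]
    have hftπ : (f ≫ t) ≫ π = 0 := by rw [Category.assoc, htπ]; simp [hp]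
    obtain ⟨u, huι⟩ : ∃ u : X ⟶ T', u ≫ ι = f ≫ t :=
      ⟨hS.exact.lift (f ≫ t) hftπ, hS.exact.lift_f _ _⟩
    obtain ⟨v, hv⟩ := hf.1.2 h1 u
    obtain ⟨t', ht'⟩ : ∃ t' : T ⟶ E, t' = t - v ≫ ι := ⟨_, rfl⟩
    have hft' : f ≫ t' = 0 := by
      have h4 : f ≫ (v ≫ ι) = f ≫ t := by rw [← Category.assoc, hv, huι]
      rw [ht', Preadditive.comp_sub, h4, sub_self]
    have ht'π : t' ≫ π = p := by
      have h5 : (v ≫ ι) ≫ π = 0 := by rw [Category.assoc, w, comp_zero]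
      rw [ht', Preadditive.sub_comp, h5, sub_zero, htπ]
    obtain ⟨σ, hσ⟩ : ∃ σ : cokernel f ⟶ E, p ≫ σ = t' :=
      ⟨cokernel.desc f t' hft', cokernel.π_desc f t' hft'⟩
    have hσπ : σ ≫ π = 𝟙 (cokernel f) := by
      have hepi'' : Epi p := by rw [hp]; exact coequalizer.π_epi
      rw [← cancel_epi p, ← Category.assoc, hσ, ht'π, Category.comp_id]
    exact ⟨ShortComplex.Splitting.ofExactOfSection _ hS.exact σ hσπ hmono⟩
  refine ⟨key, ?_⟩
  rintro X₀ ⟨⟨htc, _, hproj⟩, _⟩ rfl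
  refine (hproj (cokernel f)).1 ⟨?_, ?_⟩
  · exact htc.1 (cokernel.π f) inferInstance hf.1.1
  · intro S hS h1 h3
    exact key S hS h1 h3
end

section
/- Let mod B, mod A, mod C form a symmetric ladder of height 2. For every A-module Z there is a functorial short exact sequence 0 → i₀ i₋₁ Z → Z → j₋₁ j₀ Z → 0, where the first map is the counit of the adjunction (i₀, i₋₁) composed with inclusion and the second is the unit of the adjunction (j₀, j₋₁). Consequently, if 𝒯_X ⊆ mod B and 𝒯_Y ⊆ mod C are torsion classes closed under the relevant functors, every Z in the glued torsion class 𝒯_Z = {Z | j₀Z ∈ 𝒯_Y, i₋₁Z ∈ 𝒯_X} is an extension of j₋₁ j₀ Z by i₀ i₋₁ Z, with both i₀ i₋₁ Z and j₋₁ j₀ Z in 𝒯_Z. -/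
open CategoryTheory CategoryTheory.Limits

universe v u
open Paper in
/-- in a symmetric ladder of height 2 of module categories, every
`A`-module `Z` sits in a functorial short exact sequence
`0 ⟶ i₀ i₋₁ Z ⟶ Z ⟶ j₋₁ j₀ Z ⟶ 0` whose maps are the counit of `(i₀, i₋₁)` and the
unit of `(j₀, j₋₁)`; consequently, for torsion classes `𝒯_X`, `𝒯_Y`, every `Z` in the
glued torsion class `𝒯_Z` is an extension of `j₋₁ j₀ Z` by `i₀ i₋₁ Z`, both of which
lie in `𝒯_Z`. -/
theorem stmt18
    {k : Type} [Field k] {A B C : Type}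
    [Ring A] [Algebra k A] [FiniteDimensional k A]
    [Ring B] [Algebra k B] [FiniteDimensional k B]
    [Ring C] [Algebra k C] [FiniteDimensional k C]
    (i0 : ModuleCat.{0} B ⥤ ModuleCat.{0} A) (i1 im1 : ModuleCat.{0} A ⥤ ModuleCat.{0} B)
    (j0 : ModuleCat.{0} A ⥤ ModuleCat.{0} C) (j1 jm1 : ModuleCat.{0} C ⥤ ModuleCat.{0} A)
    (adjI1 : i1 ⊣ i0) (adjI0 : i0 ⊣ im1) (adjJ1 : j1 ⊣ j0) (adjJ0 : j0 ⊣ jm1)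
    [i0.Full] [i0.Faithful] [jm1.Full] [jm1.Faithful] [j1.Full] [j1.Faithful]
    [i0.Additive] [PreservesFiniteLimits i0] [PreservesFiniteColimits i0]
    [im1.Additive] [PreservesFiniteLimits im1] [PreservesFiniteColimits im1]
    [j0.Additive] [PreservesFiniteLimits j0] [PreservesFiniteColimits j0]
    [jm1.Additive] [PreservesFiniteLimits jm1] [PreservesFiniteColimits jm1]
    (himI : ∀ X : ModuleCat.{0} A, (∃ W, Nonempty (i0.obj W ≅ X)) ↔ IsZero (j0.obj X))
    (himJ : ∀ X : ModuleCat.{0} A, (∃ W, Nonempty (jm1.obj W ≅ X)) ↔ IsZero (im1.obj X))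
    (TX : Set (ModuleCat.{0} B)) (TY : Set (ModuleCat.{0} C))
    (hTX : IsTorsionClass TX) (hTY : IsTorsionClass TY)
    (hTX0 : ∀ W, IsZero W → W ∈ TX) (hTY0 : ∀ W, IsZero W → W ∈ TY) :
    (∀ Z : ModuleCat.{0} A, ∃ w : adjI0.counit.app Z ≫ adjJ0.unit.app Z = 0,
      (ShortComplex.mk (adjI0.counit.app Z) (adjJ0.unit.app Z) w).ShortExact) ∧
    (∀ Z ∈ {Z : ModuleCat.{0} A | j0.obj Z ∈ TY ∧ im1.obj Z ∈ TX},
      i0.obj (im1.obj Z) ∈ {Z : ModuleCat.{0} A | j0.obj Z ∈ TY ∧ im1.obj Z ∈ TX} ∧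
      jm1.obj (j0.obj Z) ∈ {Z : ModuleCat.{0} A | j0.obj Z ∈ TY ∧ im1.obj Z ∈ TX}) := by

  classical
  haveI : im1.PreservesZeroMorphisms := inferInstance
  haveI : j0.PreservesZeroMorphisms := inferInstance
  haveI : jm1.PreservesZeroMorphisms := inferInstance
  haveI : im1.PreservesHomology := {}
  haveI : j0.PreservesHomology := {}
  -- key lemma: an object killed by both `im1` and `j0` is zero
  have key : ∀ X : ModuleCat.{0} A, IsZero (im1.obj X) → IsZero (j0.obj X) → IsZero X := by
    intro X h1 h2
    obtain ⟨V, ⟨e⟩⟩ := (himJ X).mpr h1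
    have hV : IsZero V :=
      IsZero.of_iso (IsZero.of_iso h2 (j0.mapIso e)) (asIso (adjJ0.counit.app V)).symm
    exact IsZero.of_iso (jm1.map_isZero hV) e.symm
  constructor
  · intro Z
    -- zero objects
    have hz1 : IsZero (j0.obj (i0.obj (im1.obj Z))) :=
      (himI _).mp ⟨im1.obj Z, ⟨Iso.refl _⟩⟩
    have hz2 : IsZero (im1.obj (jm1.obj (j0.obj Z))) :=
      (himJ _).mp ⟨j0.obj Z, ⟨Iso.refl _⟩⟩
    -- the composition is zero
    have w : adjI0.counit.app Z ≫ adjJ0.unit.app Z = 0 := by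
      have h := adjJ0.unit.naturality (adjI0.counit.app Z)
      simp only [Functor.id_map, Functor.id_obj] at h
      rw [h]
      have h0 : adjJ0.unit.app ((im1 ⋙ i0).obj Z) = 0 :=
        (jm1.map_isZero hz1).eq_zero_of_tgt _
      rw [h0, zero_comp]
    refine ⟨w, ?_⟩
    set S : ShortComplex (ModuleCat.{0} A) :=
      ShortComplex.mk (adjI0.counit.app Z) (adjJ0.unit.app Z) w with hS
    -- `im1.map (counit)` and `j0.map (unit)` are isomorphisms
    haveI : IsIso (im1.map (adjI0.counit.app Z)) := by
      have h := adjI0.right_triangle_components Z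
      haveI : IsIso (adjI0.unit.app (im1.obj Z) ≫ im1.map (adjI0.counit.app Z)) := by
        rw [h]; infer_instance
      exact IsIso.of_isIso_comp_left (adjI0.unit.app (im1.obj Z)) _
    haveI : IsIso (j0.map (adjJ0.unit.app Z)) := by
      have h := adjJ0.left_triangle_components Z
      haveI : IsIso (j0.map (adjJ0.unit.app Z) ≫ adjJ0.counit.app (j0.obj Z)) := by
        rw [h]; infer_instance
      exact IsIso.of_isIso_comp_right _ (adjJ0.counit.app (j0.obj Z))
    -- Mono of the first map
    haveI : Mono S.f := by
      apply Preadditive.mono_of_isZero_kernel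
      apply key
      · exact IsZero.of_iso (IsZero.of_iso (isZero_zero _) (kernel.ofMono (im1.map S.f)))
          (PreservesKernel.iso im1 S.f)
      · refine IsZero.of_iso ?_ (PreservesKernel.iso j0 S.f)
        exact IsZero.of_mono (kernel.ι (j0.map S.f)) hz1
    -- Epi of the second map
    haveI : Epi S.g := by
      apply Preadditive.epi_of_isZero_cokernel
      apply key
      · refine IsZero.of_iso ?_ (PreservesCokernel.iso im1 S.g)
        exact IsZero.of_epi (cokernel.π (im1.map S.g)) hz2
      · exact IsZero.of_iso (IsZero.of_iso (isZero_zero _) (cokernel.ofEpi (j0.map S.g)))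
          (PreservesCokernel.iso j0 S.g)
    -- exactness in the middle
    have hex : S.Exact := by
      rw [ShortComplex.exact_iff_isZero_homology]
      apply key
      · refine IsZero.of_iso ?_ (S.mapHomologyIso im1).symm
        rw [← ShortComplex.exact_iff_isZero_homology]
        have hg0 : (S.map im1).g = 0 := hz2.eq_zero_of_tgt _
        rw [ShortComplex.exact_iff_epi _ hg0]
        show Epi (im1.map S.f)
        infer_instance
      · refine IsZero.of_iso ?_ (S.mapHomologyIso j0).symm
        rw [← ShortComplex.exact_iff_isZero_homology]
        have hf0 : (S.map j0).f = 0 := hz1.eq_zero_of_src _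
        rw [ShortComplex.exact_iff_mono _ hf0]
        show Mono (j0.map S.g)
        infer_instance
    exact ⟨hex⟩
  · intro Z hZ
    obtain ⟨hZY, hZX⟩ := hZ
    constructor
    · constructor
      · exact hTY0 _ ((himI _).mp ⟨im1.obj Z, ⟨Iso.refl _⟩⟩)
      · haveI : IsIso (adjI0.unit.app (im1.obj Z)) := inferInstance
        exact hTX.1 (adjI0.unit.app (im1.obj Z)) inferInstance hZX
    · constructor
      · haveI : IsIso (adjJ0.counit.app (j0.obj Z)) := inferInstance
        exact hTY.1 (inv (adjJ0.counit.app (j0.obj Z))) inferInstance hZY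
      · exact hTX0 _ ((himJ _).mp ⟨j0.obj Z, ⟨Iso.refl _⟩⟩)
end
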